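/- Let G be a lobster that is neither a path nor a caterpillar, with maximum degree Δ. Let Δ_1 be the maximum degree in G of the primary vertices (the vertices of the central path) and Δ_2 the maximum degree in G of the secondary vertices (vertices adjacent to primary vertices that are not themselves primary). Then Δ + 1 ≤ χ_td(G) ≤ Δ_1 + Δ_2 + 1. -/

import Mathlib

open SimpleGraph

/-- A `k`-total difference labeling of `G`: a proper vertex labeling `c` with labels in
`{1,…,k}` such that the induced edge label `|c u - c v|` of each edge differs from the
labels of its two incident vertices, and distinct edges sharing a vertex receive
distinct induced labels. -/
def IsTotalDiffLabeling {V : Type*} (G : SimpleGraph V) (k : ℕ) (c : V → ℕ) : Prop :=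
  (∀ v, 1 ≤ c v ∧ c v ≤ k) ∧
  (∀ u v, G.Adj u v → c u ≠ c v) ∧
  (∀ u v, G.Adj u v → Nat.dist (c u) (c v) ≠ c u ∧ Nat.dist (c u) (c v) ≠ c v) ∧
  (∀ u v w, G.Adj u v → G.Adj v w → u ≠ w →
    Nat.dist (c u) (c v) ≠ Nat.dist (c v) (c w))

/-- The total difference chromatic number of `G`: the least `k` for which `G` admits a
`k`-total difference labeling. -/
noncomputable def tdChromatic {V : Type*} (G : SimpleGraph V) : ℕ :=
  sInf {k | ∃ c : V → ℕ, IsTotalDiffLabeling G k c}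

/-- A caterpillar: a tree in which every vertex is at distance at most `1` from a
central path `p 0, p 1, …, p (n-1)`. -/
def IsCaterpillar {V : Type*} (G : SimpleGraph V) : Prop :=
  G.IsTree ∧ ∃ (n : ℕ) (p : Fin n → V), Function.Injective p ∧
    (∀ i : Fin n, ∀ h : (i : ℕ) + 1 < n, G.Adj (p i) (p ⟨(i : ℕ) + 1, h⟩)) ∧
    (∀ v : V, ∃ i : Fin n, v = p i ∨ G.Adj v (p i))

/-- A path graph: a tree all of whose vertices have degree at most `2`. -/
def IsPathGraph {V : Type*} [Fintype V] (G : SimpleGraph V) [DecidableRel G.Adj] : Prop :=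
  G.IsTree ∧ ∀ v : V, G.degree v ≤ 2

/-!
Lower bound: at a vertex `v` the differences `|c v - c u|` over the neighbours `u` are distinct
and lie in `{1, …, k - 1}`, so `deg v < k` for every `k`-total difference labeling.

Upper bound, with `k = Δ₁ + Δ₂ + 1`: label the spine periodically `k, 1, k - 1, 2, …`, so that the
spine edges carry the differences `k - 1, k - 2, k - 3, k - 2, …`. The children of a vertex labelled
`x` get labels from a window lying entirely on one side of `x`; there `y ↦ |x - y|` is injective,
so besides the differences already used at `x` a child only has to avoid the one value out of
`2x`, `x / 2` on that side. Secondary labels are taken from `[1, Δ₁] ∪ [Δ₂ + 2, k]`, so that below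
a secondary label `S` the `Δ₂ + 1` labels `S + 1, …, S + Δ₂ + 1` (if `S ≤ Δ₁`) or
`S - Δ₂ - 1, …, S - 1` (otherwise) stay in `[1, k]`. Counting shows that enough labels remain as
soon as `Δ₂ ≥ 2` and `Δ₁ + Δ₂ ≥ 5`. These hold because `G` is neither a caterpillar nor a path:
some secondary vertex has a child, a spine vertex of degree `1` would make `G` a star, and some
primary or secondary vertex has degree at least `3`.
-/

open Finset

def IsTotalDiffEdge (x y : ℕ) : Prop :=
  x ≠ y ∧ Nat.dist x y ≠ x ∧ Nat.dist x y ≠ y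

theorem IsTotalDiffEdge.symm {x y : ℕ} (h : IsTotalDiffEdge x y) : IsTotalDiffEdge y x :=
  ⟨h.1.symm, Nat.dist_comm x y ▸ h.2.2, Nat.dist_comm x y ▸ h.2.1⟩

namespace IsTotalDiffLabeling

variable {V : Type*} {G : SimpleGraph V} {k : ℕ} {c : V → ℕ}

theorem of_injOn (hrange : ∀ v, 1 ≤ c v ∧ c v ≤ k)
    (hedge : ∀ u v, G.Adj u v → IsTotalDiffEdge (c u) (c v))
    (hinj : ∀ v, Set.InjOn (fun u => Nat.dist (c v) (c u)) (G.neighborSet v)) :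
    IsTotalDiffLabeling G k c :=
  ⟨hrange, fun u v h => (hedge u v h).1, fun u v h => (hedge u v h).2,
    fun u v w huv hvw huw h => huw (hinj v huv.symm hvw (by simpa [Nat.dist_comm] using h))⟩

theorem degree_lt [Fintype V] [DecidableRel G.Adj] (h : IsTotalDiffLabeling G k c) (v : V) :
    G.degree v < k := by
  obtain ⟨hrange, hproper, -, hwedge⟩ := h
  have hmaps : Set.MapsTo (fun u => Nat.dist (c v) (c u)) (G.neighborFinset v)
      (Icc 1 (k - 1)) := by
    intro u hu
    have := hproper v u ((G.mem_neighborFinset v u).mp hu)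
    have := hrange u
    have := hrange v
    simp only [mem_coe, mem_Icc, Nat.dist]
    omega
  have hinj : Set.InjOn (fun u => Nat.dist (c v) (c u)) (G.neighborFinset v) := by
    intro u hu w hw h
    by_contra hne
    simp only [mem_coe, mem_neighborFinset] at hu hw
    exact hwedge u v w hu.symm hw hne (by simpa [Nat.dist_comm] using h)
  have := card_le_card_of_injOn _ hmaps hinj
  rw [card_neighborFinset_eq_degree, Nat.card_Icc] at this
  have := hrange v
  omega

end IsTotalDiffLabeling

theorem tdChromatic_le {V : Type*} {G : SimpleGraph V} {k : ℕ} {c : V → ℕ}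
    (h : IsTotalDiffLabeling G k c) : tdChromatic G ≤ k :=
  Nat.sInf_le ⟨c, h⟩

theorem maxDegree_lt_tdChromatic {V : Type*} [Fintype V] [Nonempty V] {G : SimpleGraph V}
    [DecidableRel G.Adj] {k : ℕ} {c : V → ℕ} (h : IsTotalDiffLabeling G k c) :
    G.maxDegree < tdChromatic G := by
  obtain ⟨c₀, hc₀⟩ :=
    Nat.sInf_mem (s := {k | ∃ c : V → ℕ, IsTotalDiffLabeling G k c}) ⟨k, c, h⟩
  obtain ⟨v, hv⟩ := G.exists_maximal_degree_vertex
  exact hv ▸ hc₀.degree_lt v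

namespace SimpleGraph

variable {V : Type*} {G : SimpleGraph V}

theorem IsAcyclic.mem_support_of_adj {u x v : V} (hG : G.IsAcyclic) (hux : G.Adj u x)
    (huv : G.Adj u v) (hxv : x ≠ v) (w : G.Walk x v) : u ∈ w.support := by
  by_contra hu
  have := isBridge_iff_forall_walk_mem_edges.mp (isAcyclic_iff_forall_adj_isBridge.mp hG huv)
    (w.cons hux)
  rw [Walk.edges_cons, List.mem_cons] at this
  rcases this with h | h
  · exact hxv (Sym2.congr_right.mp h).symm
  · exact hu (w.fst_mem_support_of_mem_edges h)

theorem Connected.eq_or_adj_or_exists_of_dist_le_two (hG : G.Connected) {u v : V}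
    (h : G.dist u v ≤ 2) : u = v ∨ G.Adj u v ∨ ∃ w, G.Adj u w ∧ G.Adj w v := by
  obtain ⟨p, hp⟩ := hG.exists_walk_length_eq_dist u v
  rw [← hp] at h
  rcases p with _ | ⟨h₁, _ | ⟨h₂, _ | ⟨h₃, p⟩⟩⟩
  · exact Or.inl rfl
  · exact Or.inr (Or.inl h₁)
  · exact Or.inr (Or.inr ⟨_, h₁, h₂⟩)
  · simp at h

theorem two_le_degree_of_adj [Fintype V] [DecidableRel G.Adj] {v u w : V} (hu : G.Adj v u)
    (hw : G.Adj v w) (huw : u ≠ w) : 2 ≤ G.degree v := by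
  classical
  rw [← card_neighborFinset_eq_degree, ← card_pair huw]
  exact card_le_card fun x hx => by
    rcases mem_insert.mp hx with rfl | hx
    · exact (mem_neighborFinset _ _ _).mpr hu
    · exact (mem_neighborFinset _ _ _).mpr (mem_singleton.mp hx ▸ hw)

end SimpleGraph

theorem Nat.card_Icc_union_Icc (a b c d : ℕ) :
    (Icc a b ∪ Icc c d).card = (b + 1 - a) + (d + 1 - c) - (min b d + 1 - max a c) := by
  have h := card_union_add_card_inter (Icc a b) (Icc c d)
  have hI : Icc a b ∩ Icc c d = Icc (max a c) (min b d) := by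
    ext y; simp only [mem_inter, mem_Icc]; omega
  rw [hI] at h
  simp only [Nat.card_Icc] at h
  omega

theorem exists_eqOn_compl_mapsTo_injOn {ι α β : Type*} (c₀ : α → β) (S : ι → Finset α)
    (T : ι → Finset β) (hS : ∀ i j v, v ∈ S i → v ∈ S j → i = j)
    (hcard : ∀ i, (S i).card ≤ (T i).card) :
    ∃ c : α → β, (∀ v, (∀ i, v ∉ S i) → c v = c₀ v) ∧
      ∀ i, Set.MapsTo c (S i) (T i) ∧ Set.InjOn c (S i) := by
  classical
  have e : ∀ i, S i ↪ T i := fun i =>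
    (Function.Embedding.nonempty_of_card_le (by simpa using hcard i)).some
  let c : α → β := fun v =>
    if h : ∃ i, v ∈ S i then e h.choose ⟨v, h.choose_spec⟩ else c₀ v
  have key : ∀ i v (hv : v ∈ S i), c v = e i ⟨v, hv⟩ := by
    intro i v hv
    have h : ∃ i, v ∈ S i := ⟨i, hv⟩
    simp only [c, dif_pos h]
    obtain rfl := hS _ _ _ h.choose_spec hv
    rfl
  refine ⟨c, fun v hv => dif_neg (not_exists.mpr hv), fun i => ⟨fun v hv => ?_, ?_⟩⟩
  · rw [key i v hv]
    exact mem_coe.mpr (e i _).2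
  · intro v hv w hw h
    rw [key i v hv, key i w hw] at h
    simpa using (e i).injective (Subtype.ext h)

namespace Lobster

def spineLabel (k i : ℕ) : ℕ :=
  if i % 4 = 0 then k else if i % 4 = 1 then 1 else if i % 4 = 2 then k - 1 else 2

theorem spineLabel_cases (k i : ℕ) :
    (i % 4 = 0 ∧ spineLabel k i = k) ∨ (i % 4 = 1 ∧ spineLabel k i = 1) ∨
      (i % 4 = 2 ∧ spineLabel k i = k - 1) ∨ (i % 4 = 3 ∧ spineLabel k i = 2) := by
  unfold spineLabel
  split_ifs <;> omega

theorem spineLabel_mem (k i : ℕ) : spineLabel k i = 1 ∨ spineLabel k i = 2 ∨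
    spineLabel k i = k - 1 ∨ spineLabel k i = k := by
  rcases spineLabel_cases k i with h | h | h | h <;> omega

theorem isTotalDiffEdge_spineLabel {k : ℕ} (hk : 6 ≤ k) (i : ℕ) :
    IsTotalDiffEdge (spineLabel k i) (spineLabel k (i + 1)) := by
  unfold IsTotalDiffEdge Nat.dist
  rcases spineLabel_cases k i with h | h | h | h <;>
    rcases spineLabel_cases k (i + 1) with h' | h' | h' | h' <;> omega

theorem dist_spineLabel_ne {k : ℕ} (hk : 6 ≤ k) (i : ℕ) :
    Nat.dist (spineLabel k i) (spineLabel k (i + 1)) ≠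
      Nat.dist (spineLabel k (i + 1)) (spineLabel k (i + 2)) := by
  unfold Nat.dist
  rcases spineLabel_cases k i with h | h | h | h <;>
    rcases spineLabel_cases k (i + 1) with h' | h' | h' | h' <;>
    rcases spineLabel_cases k (i + 2) with h'' | h'' | h'' | h'' <;> omega

theorem eq_of_dist_spineLabel_eq {k : ℕ} (hk : 6 ≤ k) {i j j' : ℕ}
    (hj : j = i + 1 ∨ i = j + 1) (hj' : j' = i + 1 ∨ i = j' + 1)
    (h : Nat.dist (spineLabel k i) (spineLabel k j) = Nat.dist (spineLabel k i) (spineLabel k j')) :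
    j = j' := by
  rcases hj with rfl | rfl <;> rcases hj' with h' | h'
  · omega
  · subst h'
    exact absurd ((Nat.dist_comm _ _).trans h.symm) (dist_spineLabel_ne hk j')
  · subst h'
    exact absurd ((Nat.dist_comm _ _).trans h) (dist_spineLabel_ne hk j)
  · omega

def compatibleLabels (W : Finset ℕ) (x : ℕ) : Finset ℕ :=
  W.filter fun y => y ≠ 2 * x ∧ 2 * y ≠ x

-- The labels available to the non-spine children of a vertex labelled `x` whose edges to the
-- spine already carry the differences `X`.
def childPool (W : Finset ℕ) (x : ℕ) (X : Finset ℕ) : Finset ℕ :=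
  (compatibleLabels W x).filter fun y => Nat.dist x y ∉ X

section ChildPool

variable {W X : Finset ℕ} {x y : ℕ}

theorem mem_childPool :
    y ∈ childPool W x X ↔ y ∈ W ∧ (y ≠ 2 * x ∧ 2 * y ≠ x) ∧ Nat.dist x y ∉ X := by
  simp [childPool, compatibleLabels, and_assoc]

theorem injOn_dist (hW : (∀ y ∈ W, x < y) ∨ ∀ y ∈ W, y < x) :
    Set.InjOn (Nat.dist x) W := by
  intro y hy z hz h
  unfold Nat.dist at h
  rcases hW with hW | hW <;> have := hW y hy <;> have := hW z hz <;> omega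

theorem card_compatibleLabels_le (hW : (∀ y ∈ W, x < y) ∨ ∀ y ∈ W, y < x) :
    (compatibleLabels W x).card ≤ (childPool W x X).card + X.card := by
  rw [← card_filter_add_card_filter_not (fun y => Nat.dist x y ∉ X)]
  refine Nat.add_le_add_left (card_le_card_of_injOn (Nat.dist x) (fun y hy => ?_) ?_) _
  · simpa using (mem_filter.mp hy).2
  · exact (injOn_dist hW).mono fun y hy => (mem_filter.mp (mem_filter.mp hy).1).1

theorem isTotalDiffEdge_of_mem_childPool (hx : 0 < x)
    (hW : (∀ y ∈ W, x < y) ∨ ∀ y ∈ W, y < x) (hW₀ : ∀ y ∈ W, 0 < y)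
    (hy : y ∈ childPool W x X) : IsTotalDiffEdge x y := by
  obtain ⟨hyW, ⟨h2x, h2y⟩, -⟩ := mem_childPool.mp hy
  have := hW₀ y hyW
  unfold IsTotalDiffEdge Nat.dist
  rcases hW with hW | hW <;> have := hW y hyW <;> omega

end ChildPool

theorem compatibleLabels_eq_erase_of_lt (W : Finset ℕ) (x : ℕ) (hW : ∀ y ∈ W, x < y) :
    compatibleLabels W x = W.erase (2 * x) := by
  ext y
  simp only [compatibleLabels, mem_filter, mem_erase]
  constructor
  · exact fun h => ⟨h.2.1, h.1⟩
  · exact fun h => ⟨h.2, h.1, by have := hW y h.2; omega⟩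

-- For odd `x` nothing is removed: `0 ∉ W` is erased as a dummy.
theorem compatibleLabels_eq_erase_of_gt (W : Finset ℕ) (x : ℕ)
    (hW : ∀ y ∈ W, 0 < y ∧ y < x) :
    compatibleLabels W x = W.erase (if x % 2 = 0 then x / 2 else 0) := by
  ext y
  simp only [compatibleLabels, mem_filter, mem_erase]
  constructor
  · rintro ⟨hy, h⟩
    have := hW y hy
    exact ⟨by split_ifs <;> omega, hy⟩
  · rintro ⟨h, hy⟩
    have := hW y hy
    exact ⟨hy, by split_ifs at h <;> omega⟩

-- Labels for the children of a spine vertex labelled `P`: on the far side of `P`, and outside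
-- `(a, b + 2)` so that the `tertiaryRange` below them stays inside `[1, a + b + 1]`.
def secondaryRange (a b P : ℕ) : Finset ℕ :=
  if P ≤ 2 then Icc (P + 1) a ∪ Icc (b + 2) (a + b + 1) else Icc 1 a ∪ Icc (b + 2) (P - 1)

def tertiaryRange (a b S : ℕ) : Finset ℕ :=
  if S ≤ a then Icc (S + 1) (S + b + 1) else Icc (S - (b + 1)) (S - 1)

section Ranges

variable {a b P S y : ℕ}

theorem secondaryRange_one_sided (hb : 1 ≤ b) (hP : P ≤ 2 ∨ a + b ≤ P) :
    (∀ y ∈ secondaryRange a b P, P < y) ∨ ∀ y ∈ secondaryRange a b P, y < P := by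
  unfold secondaryRange
  split_ifs with h
  · exact Or.inl fun y hy => by simp only [mem_union, mem_Icc] at hy; omega
  · exact Or.inr fun y hy => by simp only [mem_union, mem_Icc] at hy; omega

theorem secondaryRange_bounds (hP : P ≤ a + b + 1) (hy : y ∈ secondaryRange a b P) :
    0 < y ∧ y ≤ a + b + 1 ∧ (y ≤ a ∨ b + 2 ≤ y) := by
  unfold secondaryRange at hy
  split_ifs at hy <;> simp only [mem_union, mem_Icc] at hy <;> omega

theorem le_card_compatibleLabels_secondaryRange (hb : 2 ≤ b) (hab : 5 ≤ a + b)
    (hP : P = 1 ∨ P = 2 ∨ P = a + b ∨ P = a + b + 1) :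
    a ≤ (compatibleLabels (secondaryRange a b P) P).card := by
  unfold secondaryRange
  split_ifs with hP2
  · rw [compatibleLabels_eq_erase_of_lt _ _ fun y hy => by
      simp only [mem_union, mem_Icc] at hy; omega]
    rw [card_erase_eq_ite, Nat.card_Icc_union_Icc]
    simp only [mem_union, mem_Icc]
    split_ifs <;> omega
  · rw [compatibleLabels_eq_erase_of_gt _ _ fun y hy => by
      simp only [mem_union, mem_Icc] at hy; omega]
    rw [card_erase_eq_ite, Nat.card_Icc_union_Icc]
    simp only [mem_union, mem_Icc]
    split_ifs <;> omega

theorem tertiaryRange_one_sided :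
    (∀ y ∈ tertiaryRange a b S, S < y) ∨ ∀ y ∈ tertiaryRange a b S, y < S := by
  unfold tertiaryRange
  split_ifs with h
  · exact Or.inl fun y hy => by simp only [mem_Icc] at hy; omega
  · exact Or.inr fun y hy => by simp only [mem_Icc] at hy; omega

theorem tertiaryRange_bounds (hS : S ≤ a ∨ b + 2 ≤ S) (hSk : S ≤ a + b + 1)
    (hy : y ∈ tertiaryRange a b S) : 0 < y ∧ y ≤ a + b + 1 := by
  unfold tertiaryRange at hy
  split_ifs at hy <;> simp only [mem_Icc] at hy <;> omega

theorem le_card_compatibleLabels_tertiaryRange (hS : S ≤ a ∨ b + 2 ≤ S) :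
    b ≤ (compatibleLabels (tertiaryRange a b S) S).card := by
  unfold tertiaryRange
  split_ifs with h
  · rw [compatibleLabels_eq_erase_of_lt _ _ fun y hy => by simp only [mem_Icc] at hy; omega]
    rw [card_erase_eq_ite, Nat.card_Icc]
    split_ifs <;> omega
  · rw [compatibleLabels_eq_erase_of_gt _ _ fun y hy => by simp only [mem_Icc] at hy; omega]
    rw [card_erase_eq_ite, Nat.card_Icc]
    split_ifs <;> omega

end Ranges

variable {V : Type*} {G : SimpleGraph V} {n : ℕ} {p : Fin n → V}

structure IsSpine (G : SimpleGraph V) (p : Fin n → V) : Prop where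
  injective : Function.Injective p
  adj_succ : ∀ (i : Fin n) (h : (i : ℕ) + 1 < n), G.Adj (p i) (p ⟨i + 1, h⟩)

def IsSecondary (G : SimpleGraph V) (p : Fin n → V) (v : V) : Prop :=
  (∀ i, v ≠ p i) ∧ ∃ i, G.Adj v (p i)

def IsTertiary (G : SimpleGraph V) (p : Fin n → V) (v : V) : Prop :=
  (∀ i, v ≠ p i) ∧ ∀ i, ¬ G.Adj v (p i)

namespace IsSpine

theorem exists_walk (hp : IsSpine G p) (i : Fin n) (j : ℕ) :
    ∀ (hj : j < n), (i : ℕ) ≤ j → ∃ w : G.Walk (p i) (p ⟨j, hj⟩),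
      ∀ v ∈ w.support, ∃ l : Fin n, i ≤ l ∧ (l : ℕ) ≤ j ∧ v = p l := by
  induction j with
  | zero =>
    intro hj hij
    obtain rfl : i = ⟨0, hj⟩ := Fin.ext (by simp; omega)
    exact ⟨Walk.nil, fun v hv => ⟨_, le_rfl, le_rfl, by simpa using hv⟩⟩
  | succ j ih =>
    intro hj hij
    rcases Nat.lt_or_ge (i : ℕ) (j + 1) with hlt | hge
    · obtain ⟨w, hw⟩ := ih (by omega) (by omega)
      refine ⟨w.concat (hp.adj_succ ⟨j, by omega⟩ hj), fun v hv => ?_⟩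
      simp only [Walk.support_concat, List.mem_append, List.mem_singleton] at hv
      rcases hv with hv | rfl
      · obtain ⟨l, hil, hlj, rfl⟩ := hw v hv
        exact ⟨l, hil, by omega, rfl⟩
      · exact ⟨⟨j + 1, hj⟩, Fin.le_def.mpr (by simp; omega), le_rfl, rfl⟩
    · obtain rfl : i = ⟨j + 1, hj⟩ := Fin.ext (by simp; omega)
      exact ⟨Walk.nil, fun v hv => ⟨_, le_rfl, le_rfl, by simpa using hv⟩⟩

theorem exists_walk_support_subset (hp : IsSpine G p) (i j : Fin n) :
    ∃ w : G.Walk (p i) (p j), ∀ v ∈ w.support, ∃ l, v = p l := by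
  rcases le_total i j with hij | hji
  · obtain ⟨w, hw⟩ := hp.exists_walk i j j.isLt hij
    exact ⟨w, fun v hv => (hw v hv).imp fun l hl => hl.2.2⟩
  · obtain ⟨w, hw⟩ := hp.exists_walk j i i.isLt hji
    refine ⟨w.reverse, fun v hv => ?_⟩
    rw [Walk.support_reverse, List.mem_reverse] at hv
    exact (hw v hv).imp fun l hl => hl.2.2

theorem exists_adj_of_ne (hp : IsSpine G p) {i j : Fin n} (hij : i ≠ j) :
    ∃ l, G.Adj (p i) (p l) := by
  by_cases hi : (i : ℕ) + 1 < n
  · exact ⟨_, hp.adj_succ i hi⟩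
  · have := Fin.val_ne_of_ne hij
    have := i.isLt
    have := j.isLt
    have h := hp.adj_succ ⟨i - 1, by omega⟩ (by simp; omega)
    rw [show (⟨(i : ℕ) - 1 + 1, _⟩ : Fin n) = i from Fin.ext (by simp; omega)] at h
    exact ⟨_, h.symm⟩

variable (hG : G.IsAcyclic) (hp : IsSpine G p)
include hG hp

theorem val_eq_succ_or_succ_eq_of_adj {i j : Fin n} (h : G.Adj (p i) (p j)) :
    (j : ℕ) = i + 1 ∨ (i : ℕ) = j + 1 := by
  wlog hij : i < j generalizing i j
  · have hji : j < i := lt_of_le_of_ne (not_lt.mp hij) fun e => h.ne (congrArg p e.symm)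
    exact (this h.symm hji).symm
  by_contra hne
  rw [Fin.lt_def] at hij
  have hsucc : (i : ℕ) + 1 < n := by omega
  obtain ⟨w, hw⟩ := hp.exists_walk ⟨i + 1, hsucc⟩ j j.isLt (by simp; omega)
  have hx : p ⟨i + 1, hsucc⟩ ≠ p j := fun e => hne (by
    have := congrArg Fin.val (hp.injective e)
    simp at this
    omega)
  obtain ⟨l, hl, -, hpl⟩ := hw _ (hG.mem_support_of_adj (hp.adj_succ i hsucc) h hx w)
  have := congrArg Fin.val (hp.injective hpl)
  simp [Fin.le_def] at hl
  omega

theorem eq_of_adj_of_adj {s : V} (hs : ∀ l, s ≠ p l) {i j : Fin n} (hi : G.Adj s (p i))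
    (hj : G.Adj s (p j)) : i = j := by
  by_contra hij
  obtain ⟨w, hw⟩ := hp.exists_walk_support_subset i j
  obtain ⟨l, hl⟩ := hw s (hG.mem_support_of_adj hi hj (hp.injective.ne hij) w)
  exact hs l hl

theorem not_adj_of_isSecondary {s s' : V} (hs : IsSecondary G p s) (hs' : IsSecondary G p s') :
    ¬ G.Adj s s' := by
  intro h
  obtain ⟨⟨hsp, i, hi⟩, ⟨hs'p, j, hj⟩⟩ := And.intro hs hs'
  obtain ⟨w, hw⟩ := hp.exists_walk_support_subset i j
  have := hG.mem_support_of_adj hi h (hs'p i).symm (w.concat hj.symm)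
  simp only [Walk.support_concat, List.mem_append, List.mem_singleton] at this
  rcases this with hm | rfl
  · obtain ⟨l, hl⟩ := hw s hm
    exact hsp l hl
  · exact h.ne rfl

theorem eq_of_adj_of_adj_of_adj {t u u' : V} (ht : ∀ l, t ≠ p l) {i j : Fin n}
    (hu : G.Adj u (p i)) (hu' : G.Adj u' (p j)) (htu : G.Adj t u) (htu' : G.Adj t u') : u = u' := by
  by_contra hne
  obtain ⟨w, hw⟩ := hp.exists_walk_support_subset i j
  have := hG.mem_support_of_adj htu htu' hne ((w.cons hu).concat hu'.symm)
  simp only [Walk.support_concat, List.mem_append, Walk.support_cons, List.mem_cons,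
    List.not_mem_nil, or_false] at this
  rcases this with (rfl | hm) | rfl
  · exact htu.ne rfl
  · obtain ⟨l, hl⟩ := hw t hm
    exact ht l hl
  · exact htu'.ne rfl

theorem not_adj_of_isTertiary {t t' s s' : V} (ht : IsTertiary G p t) (ht' : IsTertiary G p t')
    {i j : Fin n} (hs : G.Adj s (p i)) (hs' : G.Adj s' (p j)) (hts : G.Adj t s)
    (hts' : G.Adj t' s') : ¬ G.Adj t t' := by
  intro h
  obtain ⟨w, hw⟩ := hp.exists_walk_support_subset i j
  have hne : s ≠ t' := by rintro rfl; exact ht'.2 i hs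
  have := hG.mem_support_of_adj hts h hne (((w.cons hs).concat hs'.symm).concat hts'.symm)
  simp only [Walk.support_concat, List.mem_append, Walk.support_cons, List.mem_cons,
    List.not_mem_nil, or_false] at this
  rcases this with ((rfl | hm) | rfl) | rfl
  · exact hts.ne rfl
  · obtain ⟨l, hl⟩ := hw t hm
    exact ht.1 l hl
  · exact ht.2 j hs'
  · exact h.ne rfl

end IsSpine

structure IsLobster (G : SimpleGraph V) (p : Fin n → V) : Prop where
  isTree : G.IsTree
  isSpine : IsSpine G p
  exists_dist_le_two : ∀ v, ∃ i, G.dist v (p i) ≤ 2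

theorem exists_isTertiary_of_not_isCaterpillar (hG : G.IsTree) (hp : IsSpine G p)
    (hcat : ¬ IsCaterpillar G) : ∃ t, IsTertiary G p t := by
  by_contra h
  refine hcat ⟨hG, n, p, hp.injective, hp.adj_succ, fun v => ?_⟩
  by_cases hv : ∃ i, v = p i
  · exact hv.imp fun i hi => Or.inl hi
  · obtain ⟨i, hi⟩ : ∃ i, G.Adj v (p i) := by
      by_contra h'
      exact h ⟨v, not_exists.mp hv, not_exists.mp h'⟩
    exact ⟨i, Or.inr hi⟩

namespace IsLobster

variable (hL : IsLobster G p)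
include hL

theorem exists_isSecondary_adj {t : V} (ht : IsTertiary G p t) :
    ∃ s, IsSecondary G p s ∧ G.Adj t s := by
  obtain ⟨i, hi⟩ := hL.exists_dist_le_two t
  rcases hL.isTree.connected.eq_or_adj_or_exists_of_dist_le_two hi with h | h | ⟨s, hts, hsi⟩
  · exact absurd h (ht.1 i)
  · exact absurd h (ht.2 i)
  · exact ⟨s, ⟨fun l hl => ht.2 l (hl ▸ hts), i, hsi⟩, hts⟩

theorem eq_of_adj_of_isTertiary {t s u : V} (ht : IsTertiary G p t) (hs : IsSecondary G p s)
    (hts : G.Adj t s) (htu : G.Adj t u) : u = s := by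
  have hG := hL.isTree.isAcyclic
  obtain ⟨i, hsi⟩ := hs.2
  have hu : ∀ l, u ≠ p l := fun l hl => ht.2 l (hl ▸ htu)
  by_cases hup : ∃ j, G.Adj u (p j)
  · obtain ⟨j, huj⟩ := hup
    exact hL.isSpine.eq_of_adj_of_adj_of_adj hG ht.1 huj hsi htu hts
  · have hu' : IsTertiary G p u := ⟨hu, not_exists.mp hup⟩
    obtain ⟨s', ⟨-, j, hs'j⟩, hus'⟩ := hL.exists_isSecondary_adj hu'
    exact absurd htu (hL.isSpine.not_adj_of_isTertiary hG ht hu' hsi hs'j hts hus')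

theorem degree_le_one_of_isTertiary [Fintype V] [DecidableRel G.Adj] {t : V}
    (ht : IsTertiary G p t) : G.degree t ≤ 1 := by
  obtain ⟨s, hs, hts⟩ := hL.exists_isSecondary_adj ht
  rw [← card_neighborFinset_eq_degree, card_le_one]
  intro u hu w hw
  rw [mem_neighborFinset] at hu hw
  rw [hL.eq_of_adj_of_isTertiary ht hs hts hu, hL.eq_of_adj_of_isTertiary ht hs hts hw]

theorem isCaterpillar_of_degree_le_one [Fintype V] [DecidableRel G.Adj] {s : V}
    (hs : ∀ l, s ≠ p l) {i : Fin n} (hsi : G.Adj s (p i)) (hdeg : G.degree (p i) ≤ 1) :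
    IsCaterpillar G := by
  have honly : ∀ u, G.Adj (p i) u → u = s := fun u hu =>
    card_le_one.mp (by rwa [card_neighborFinset_eq_degree])
      u ((mem_neighborFinset _ _ _).mpr hu) s ((mem_neighborFinset _ _ _).mpr hsi.symm)
  have hsingle : ∀ j, j = i := by
    intro j
    by_contra hji
    obtain ⟨l, hl⟩ := hL.isSpine.exists_adj_of_ne (Ne.symm hji)
    exact hs l (honly _ hl).symm
  refine ⟨hL.isTree, 1, ![s], Function.injective_of_subsingleton _,
    fun j h => absurd h (by omega), fun v => ⟨0, ?_⟩⟩
  obtain ⟨j, hj⟩ := hL.exists_dist_le_two v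
  rw [hsingle j] at hj
  rcases hL.isTree.connected.eq_or_adj_or_exists_of_dist_le_two hj with rfl | h | ⟨u, hvu, hui⟩
  · exact Or.inr hsi.symm
  · exact Or.inl (honly v h.symm)
  · exact Or.inr (honly u hui.symm ▸ hvu)

theorem five_le_add_of_not_isPathGraph [Fintype V] [DecidableRel G.Adj]
    (hpath : ¬ IsPathGraph G) {a b : ℕ} (ha : ∀ i, G.degree (p i) ≤ a)
    (hb : ∀ v, IsSecondary G p v → G.degree v ≤ b)
    (ha₂ : 2 ≤ a) (hb₂ : 2 ≤ b) : 5 ≤ a + b := by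
  obtain ⟨v, hv⟩ : ∃ v, 3 ≤ G.degree v := by
    by_contra h
    exact hpath ⟨hL.isTree, fun v => by have := not_exists.mp h v; omega⟩
  by_cases hvp : ∃ j, v = p j
  · obtain ⟨j, rfl⟩ := hvp
    have := ha j
    omega
  by_cases hva : ∃ j, G.Adj v (p j)
  · have := hb v ⟨not_exists.mp hvp, hva⟩
    omega
  · have := hL.degree_le_one_of_isTertiary ⟨not_exists.mp hvp, not_exists.mp hva⟩
    omega

end IsLobster

section SpineDiffs

variable [DecidableRel G.Adj] {c c' : V → ℕ} {v : V}

def spineDiffs (G : SimpleGraph V) [DecidableRel G.Adj] (p : Fin n → V) (c : V → ℕ) (v : V) :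
    Finset ℕ :=
  (univ.filter fun j => G.Adj v (p j)).image fun j => Nat.dist (c v) (c (p j))

theorem dist_mem_spineDiffs {j : Fin n} (h : G.Adj v (p j)) :
    Nat.dist (c v) (c (p j)) ∈ spineDiffs G p c v :=
  mem_image_of_mem _ (by simpa using h)

theorem spineDiffs_congr (hv : c v = c' v) (hp : ∀ j, c (p j) = c' (p j)) :
    spineDiffs G p c v = spineDiffs G p c' v := by
  simp only [spineDiffs, hv, hp]

theorem card_spineDiffs_add_card_le_degree [Fintype V] [DecidableEq V]
    (hp : Function.Injective p) (c : V → ℕ) (v : V) :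
    (spineDiffs G p c v).card + ((G.neighborFinset v).filter fun u => ∀ j, u ≠ p j).card ≤
      G.degree v := by
  have hspine : (univ.filter fun j => G.Adj v (p j)).card ≤
      ((G.neighborFinset v).filter fun u => ¬ ∀ j, u ≠ p j).card :=
    card_le_card_of_injOn p (fun j hj => by simpa using hj) hp.injOn
  have := card_filter_add_card_filter_not (s := G.neighborFinset v) fun u => ∀ j, u ≠ p j
  rw [card_neighborFinset_eq_degree] at this
  have := card_image_le (s := univ.filter fun j => G.Adj v (p j))
    (f := fun j => Nat.dist (c v) (c (p j)))
  rw [← spineDiffs] at this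
  omega

theorem injOn_dist_neighborSet {W : Finset ℕ}
    (hW : (∀ y ∈ W, c v < y) ∨ ∀ y ∈ W, y < c v)
    (hspine : Set.InjOn (fun u => Nat.dist (c v) (c u)) {u | G.Adj v u ∧ ∃ j, u = p j})
    (hpool : ∀ u, G.Adj v u → (∀ j, u ≠ p j) →
      c u ∈ childPool W (c v) (spineDiffs G p c v))
    (hinj : Set.InjOn c {u | G.Adj v u ∧ ∀ j, u ≠ p j}) :
    Set.InjOn (fun u => Nat.dist (c v) (c u)) (G.neighborSet v) := by
  have hfresh : ∀ u w, G.Adj v u → G.Adj v w → (∀ j, u ≠ p j) → (∃ j, w = p j) →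
      Nat.dist (c v) (c u) ≠ Nat.dist (c v) (c w) := by
    rintro u w hu hw hu' ⟨j, rfl⟩ h
    exact (mem_childPool.mp (hpool u hu hu')).2.2 (h ▸ dist_mem_spineDiffs hw)
  intro u hu w hw h
  simp only [mem_neighborSet] at hu hw
  by_cases hu' : ∃ j, u = p j <;> by_cases hw' : ∃ j, w = p j
  · exact hspine ⟨hu, hu'⟩ ⟨hw, hw'⟩ h
  · exact absurd h.symm (hfresh w u hw hu (not_exists.mp hw') hu')
  · exact absurd h (hfresh u w hu hw (not_exists.mp hu') hw')
  · have hcu := mem_childPool.mp (hpool u hu (not_exists.mp hu'))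
    have hcw := mem_childPool.mp (hpool w hw (not_exists.mp hw'))
    exact hinj ⟨hu, not_exists.mp hu'⟩ ⟨hw, not_exists.mp hw'⟩ (injOn_dist hW hcu.1 hcw.1 h)

end SpineDiffs

structure IsSecondaryLabeling (G : SimpleGraph V) [DecidableRel G.Adj] (p : Fin n → V)
    (a b : ℕ) (c : V → ℕ) : Prop where
  spine : ∀ i, c (p i) = spineLabel (a + b + 1) i
  mem_secondary : ∀ i v, G.Adj (p i) v → (∀ j, v ≠ p j) →
    c v ∈ childPool (secondaryRange a b (c (p i))) (c (p i)) (spineDiffs G p c (p i))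
  injOn_secondary : ∀ i, Set.InjOn c {v | G.Adj (p i) v ∧ ∀ j, v ≠ p j}

structure IsLobsterLabeling (G : SimpleGraph V) [DecidableRel G.Adj] (p : Fin n → V)
    (a b : ℕ) (c : V → ℕ) : Prop extends IsSecondaryLabeling G p a b c where
  mem_tertiary : ∀ s t, IsSecondary G p s → G.Adj s t → IsTertiary G p t →
    c t ∈ childPool (tertiaryRange a b (c s)) (c s) (spineDiffs G p c s)
  injOn_tertiary : ∀ s, IsSecondary G p s → Set.InjOn c {t | G.Adj s t ∧ IsTertiary G p t}

namespace IsSecondaryLabeling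

variable [DecidableRel G.Adj] {a b : ℕ} {c : V → ℕ} (hc : IsSecondaryLabeling G p a b c)
include hc

theorem spine_bounds (hab : 5 ≤ a + b) (i : Fin n) :
    0 < c (p i) ∧ c (p i) ≤ a + b + 1 ∧ (c (p i) ≤ 2 ∨ a + b ≤ c (p i)) := by
  rw [hc.spine i]
  rcases spineLabel_mem (a + b + 1) i with h | h | h | h <;> omega

theorem secondary_bounds (hab : 5 ≤ a + b) {s : V} (hs : IsSecondary G p s) :
    0 < c s ∧ c s ≤ a + b + 1 ∧ (c s ≤ a ∨ b + 2 ≤ c s) := by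
  obtain ⟨hsp, i, hsi⟩ := hs
  exact secondaryRange_bounds (hc.spine_bounds hab i).2.1
    (mem_childPool.mp (hc.mem_secondary i s hsi.symm hsp)).1

theorem isTotalDiffEdge_of_adj_spine (hG : G.IsAcyclic) (hp : IsSpine G p) (hb : 2 ≤ b)
    (hab : 5 ≤ a + b) {i : Fin n} {v : V} (h : G.Adj (p i) v) :
    IsTotalDiffEdge (c (p i)) (c v) := by
  by_cases hv : ∃ j, v = p j
  · obtain ⟨j, rfl⟩ := hv
    rw [hc.spine, hc.spine]
    rcases hp.val_eq_succ_or_succ_eq_of_adj hG h with hj | hj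
    · exact hj ▸ isTotalDiffEdge_spineLabel (by omega) i
    · exact hj ▸ (isTotalDiffEdge_spineLabel (by omega) j).symm
  · obtain ⟨h0, hk, hside⟩ := hc.spine_bounds hab i
    exact isTotalDiffEdge_of_mem_childPool h0 (secondaryRange_one_sided (by omega) hside)
      (fun y hy => (secondaryRange_bounds hk hy).1) (hc.mem_secondary i v h (not_exists.mp hv))

end IsSecondaryLabeling

namespace IsLobsterLabeling

variable [DecidableRel G.Adj] {a b : ℕ} {c : V → ℕ} (hc : IsLobsterLabeling G p a b c)
include hc

theorem isTotalDiffEdge_of_adj_secondary (hG : G.IsAcyclic) (hp : IsSpine G p)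
    (hab : 5 ≤ a + b) {s t : V} (hs : IsSecondary G p s) (h : G.Adj s t) (ht : ∀ j, t ≠ p j) :
    IsTotalDiffEdge (c s) (c t) := by
  have ht' : IsTertiary G p t :=
    ⟨ht, fun j htj => hp.not_adj_of_isSecondary hG hs ⟨ht, j, htj⟩ h⟩
  obtain ⟨h0, hk, hside⟩ := hc.secondary_bounds hab hs
  exact isTotalDiffEdge_of_mem_childPool h0 tertiaryRange_one_sided
    (fun y hy => (tertiaryRange_bounds hside hk hy).1) (hc.mem_tertiary s t hs h ht')

theorem bounds (hL : IsLobster G p) (hab : 5 ≤ a + b) (v : V) :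
    1 ≤ c v ∧ c v ≤ a + b + 1 := by
  by_cases hv : ∃ i, v = p i
  · obtain ⟨i, rfl⟩ := hv
    have := hc.spine_bounds hab i
    omega
  by_cases hva : ∃ i, G.Adj v (p i)
  · have := hc.secondary_bounds hab ⟨not_exists.mp hv, hva⟩
    omega
  · have ht : IsTertiary G p v := ⟨not_exists.mp hv, not_exists.mp hva⟩
    obtain ⟨s, hs, hvs⟩ := hL.exists_isSecondary_adj ht
    obtain ⟨-, hk, hside⟩ := hc.secondary_bounds hab hs
    have := tertiaryRange_bounds hside hk
      (mem_childPool.mp (hc.mem_tertiary s v hs hvs.symm ht)).1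
    omega

theorem isTotalDiffEdge (hL : IsLobster G p) (hb : 2 ≤ b) (hab : 5 ≤ a + b) {u v : V}
    (h : G.Adj u v) : IsTotalDiffEdge (c u) (c v) := by
  have hG := hL.isTree.isAcyclic
  by_cases hu : ∃ i, u = p i
  · obtain ⟨i, rfl⟩ := hu
    exact hc.isTotalDiffEdge_of_adj_spine hG hL.isSpine hb hab h
  by_cases hv : ∃ i, v = p i
  · obtain ⟨i, rfl⟩ := hv
    exact (hc.isTotalDiffEdge_of_adj_spine hG hL.isSpine hb hab h.symm).symm
  by_cases hua : ∃ i, G.Adj u (p i)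
  · exact hc.isTotalDiffEdge_of_adj_secondary hG hL.isSpine hab ⟨not_exists.mp hu, hua⟩ h
      (not_exists.mp hv)
  by_cases hva : ∃ i, G.Adj v (p i)
  · exact (hc.isTotalDiffEdge_of_adj_secondary hG hL.isSpine hab ⟨not_exists.mp hv, hva⟩ h.symm
      (not_exists.mp hu)).symm
  have hu' : IsTertiary G p u := ⟨not_exists.mp hu, not_exists.mp hua⟩
  obtain ⟨s, hs, hus⟩ := hL.exists_isSecondary_adj hu'
  exact absurd (hL.eq_of_adj_of_isTertiary hu' hs hus h ▸ hs.2) hva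

theorem injOn_dist (hL : IsLobster G p) (hb : 2 ≤ b) (hab : 5 ≤ a + b) (v : V) :
    Set.InjOn (fun u => Nat.dist (c v) (c u)) (G.neighborSet v) := by
  have hG := hL.isTree.isAcyclic
  have hp := hL.isSpine
  by_cases hv : ∃ i, v = p i
  · obtain ⟨i, rfl⟩ := hv
    refine injOn_dist_neighborSet
      (secondaryRange_one_sided (by omega) (hc.spine_bounds hab i).2.2) ?_
      (hc.mem_secondary i) (hc.injOn_secondary i)
    rintro _ ⟨hu, j, rfl⟩ _ ⟨hw, j', rfl⟩ h
    simp only [hc.spine] at h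
    exact congrArg p (Fin.ext (eq_of_dist_spineLabel_eq (by omega)
      (hp.val_eq_succ_or_succ_eq_of_adj hG hu) (hp.val_eq_succ_or_succ_eq_of_adj hG hw) h))
  by_cases hva : ∃ i, G.Adj v (p i)
  · have hs : IsSecondary G p v := ⟨not_exists.mp hv, hva⟩
    have htert : ∀ u, G.Adj v u → (∀ j, u ≠ p j) → IsTertiary G p u := fun u hvu hu =>
      ⟨hu, fun j huj => hp.not_adj_of_isSecondary hG hs ⟨hu, j, huj⟩ hvu⟩
    refine injOn_dist_neighborSet tertiaryRange_one_sided ?_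
      (fun u hvu hu => hc.mem_tertiary v u hs hvu (htert u hvu hu))
      ((hc.injOn_tertiary v hs).mono fun u hu => Set.mem_ofPred.mpr ⟨hu.1, htert u hu.1 hu.2⟩)
    rintro _ ⟨hu, j, rfl⟩ _ ⟨hw, j', rfl⟩ -
    rw [hp.eq_of_adj_of_adj hG hs.1 hu hw]
  · have ht : IsTertiary G p v := ⟨not_exists.mp hv, not_exists.mp hva⟩
    obtain ⟨s, hs, hvs⟩ := hL.exists_isSecondary_adj ht
    intro u hu w hw _
    rw [hL.eq_of_adj_of_isTertiary ht hs hvs hu, hL.eq_of_adj_of_isTertiary ht hs hvs hw]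

theorem isTotalDiffLabeling (hL : IsLobster G p) (hb : 2 ≤ b) (hab : 5 ≤ a + b) :
    IsTotalDiffLabeling G (a + b + 1) c :=
  .of_injOn (hc.bounds hL hab) (fun _ _ h => hc.isTotalDiffEdge hL hb hab h)
    (hc.injOn_dist hL hb hab)

end IsLobsterLabeling

theorem card_filter_neighborFinset_le_card_childPool [Fintype V] [DecidableEq V]
    [DecidableRel G.Adj] (hp : Function.Injective p) {c : V → ℕ} {v : V} {W : Finset ℕ}
    {m : ℕ}
    (hW : (∀ y ∈ W, c v < y) ∨ ∀ y ∈ W, y < c v) (hdeg : G.degree v ≤ m)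
    (hm : m ≤ (compatibleLabels W (c v)).card) :
    ((G.neighborFinset v).filter fun u => ∀ j, u ≠ p j).card ≤
      (childPool W (c v) (spineDiffs G p c v)).card := by
  have := card_spineDiffs_add_card_le_degree (G := G) hp c v
  have := card_compatibleLabels_le (X := spineDiffs G p c v) hW
  omega

theorem exists_isSecondaryLabeling [Fintype V] [DecidableEq V] [DecidableRel G.Adj]
    (hG : G.IsAcyclic) (hp : IsSpine G p) {a b : ℕ} (ha : ∀ i, G.degree (p i) ≤ a)
    (hb : 2 ≤ b) (hab : 5 ≤ a + b) : ∃ c, IsSecondaryLabeling G p a b c := by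
  let c₀ : V → ℕ := Function.extend p (fun i => spineLabel (a + b + 1) i) 0
  have hc₀ : ∀ i, c₀ (p i) = spineLabel (a + b + 1) i := hp.injective.extend_apply _ _
  have hspine : ∀ i, c₀ (p i) = 1 ∨ c₀ (p i) = 2 ∨ c₀ (p i) = a + b ∨
      c₀ (p i) = a + b + 1 := fun i => by
    rw [hc₀ i]
    rcases spineLabel_mem (a + b + 1) i with h | h | h | h <;> omega
  obtain ⟨c, hcoff, hc⟩ := exists_eqOn_compl_mapsTo_injOn c₀
    (fun i => (G.neighborFinset (p i)).filter fun v => ∀ j, v ≠ p j)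
    (fun i => childPool (secondaryRange a b (c₀ (p i))) (c₀ (p i)) (spineDiffs G p c₀ (p i)))
    (fun i j v hi hj => by
      simp only [mem_filter, mem_neighborFinset] at hi hj
      exact hp.eq_of_adj_of_adj hG hi.2 hi.1.symm hj.1.symm)
    (fun i => card_filter_neighborFinset_le_card_childPool hp.injective
      (secondaryRange_one_sided (by omega) (by rcases hspine i with h | h | h | h <;> omega))
      (ha i) (le_card_compatibleLabels_secondaryRange hb hab (hspine i)))
  have hcp : ∀ i, c (p i) = c₀ (p i) := fun i =>
    hcoff (p i) fun j h => (mem_filter.mp h).2 i rfl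
  refine ⟨c, fun i => (hcp i).trans (hc₀ i), fun i v hv hvp => ?_,
    fun i => (hc i).2.mono fun v hv => by simpa using hv⟩
  rw [spineDiffs_congr (hcp i) hcp, hcp i]
  exact (hc i).1 (by simpa using And.intro hv hvp)

theorem IsSecondaryLabeling.exists_isLobsterLabeling [Fintype V] [DecidableEq V]
    [DecidableRel G.Adj] {a b : ℕ} {c₀ : V → ℕ} (hc₀ : IsSecondaryLabeling G p a b c₀)
    (hG : G.IsAcyclic) (hp : IsSpine G p) (hb : ∀ v, IsSecondary G p v → G.degree v ≤ b)
    (hab : 5 ≤ a + b) : ∃ c, IsLobsterLabeling G p a b c := by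
  obtain ⟨c, hcoff, hc⟩ := exists_eqOn_compl_mapsTo_injOn c₀
    (fun s : {s // IsSecondary G p s} =>
      (G.neighborFinset s).filter fun t => (∀ j, t ≠ p j) ∧ ∀ j, ¬ G.Adj t (p j))
    (fun s => childPool (tertiaryRange a b (c₀ s)) (c₀ s) (spineDiffs G p c₀ s))
    (fun s s' t hs hs' => by
      simp only [mem_filter, mem_neighborFinset] at hs hs'
      obtain ⟨⟨-, i, hi⟩, ⟨-, j, hj⟩⟩ := And.intro s.2 s'.2
      exact Subtype.ext (hp.eq_of_adj_of_adj_of_adj hG hs.2.1 hi hj hs.1.symm hs'.1.symm))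
    (fun s => (card_le_card fun t ht => by
        simp only [mem_filter] at ht ⊢
        exact ⟨ht.1, ht.2.1⟩).trans
      (card_filter_neighborFinset_le_card_childPool hp.injective tertiaryRange_one_sided
        (hb s s.2) (le_card_compatibleLabels_tertiaryRange (hc₀.secondary_bounds hab s.2).2.2)))
  have hcp : ∀ i, c (p i) = c₀ (p i) := fun i =>
    hcoff (p i) fun s h => (mem_filter.mp h).2.1 i rfl
  have hcs : ∀ s, IsSecondary G p s → c s = c₀ s := fun s hs => hcoff s fun s' h => by
    obtain ⟨i, hi⟩ := hs.2
    exact (mem_filter.mp h).2.2 i hi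
  refine ⟨c, ⟨fun i => (hcp i).trans (hc₀.spine i), fun i v hv hvp => ?_, fun i => ?_⟩,
    fun s t hs hst ht => ?_, fun s hs => (hc ⟨s, hs⟩).2.mono fun t ⟨hst, ht⟩ => ?_⟩
  · rw [spineDiffs_congr (hcp i) hcp, hcp i, hcs v ⟨hvp, i, hv.symm⟩]
    exact hc₀.mem_secondary i v hv hvp
  · exact (hc₀.injOn_secondary i).congr fun v hv => (hcs v ⟨hv.2, i, hv.1.symm⟩).symm
  · rw [spineDiffs_congr (hcs s hs) hcp, hcs s hs]
    exact (hc ⟨s, hs⟩).1 (by simpa using And.intro hst (show _ ∧ _ from ht))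
  · simpa using And.intro hst (show _ ∧ _ from ht)

end Lobster

theorem tdChromatic_lobster_general {V : Type*} [Fintype V] [DecidableEq V] (G : SimpleGraph V)
    [DecidableRel G.Adj] (htree : G.IsTree) (n : ℕ) (p : Fin n → V)
    (hinj : Function.Injective p)
    (hpath : ∀ i : Fin n, ∀ h : (i : ℕ) + 1 < n, G.Adj (p i) (p ⟨(i : ℕ) + 1, h⟩))
    (hcover : ∀ v : V, ∃ i : Fin n, G.dist v (p i) ≤ 2)
    (hnotpath : ¬ IsPathGraph G) (hnotcat : ¬ IsCaterpillar G)
    (Δ₁ Δ₂ : ℕ)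
    (hΔ₁le : ∀ i : Fin n, G.degree (p i) ≤ Δ₁)
    (hΔ₂le : ∀ v : V, (∀ i : Fin n, v ≠ p i) → (∃ i : Fin n, G.Adj v (p i)) →
      G.degree v ≤ Δ₂) :
    G.maxDegree + 1 ≤ tdChromatic G ∧ tdChromatic G ≤ Δ₁ + Δ₂ + 1 := by
  have hp : Lobster.IsSpine G p := ⟨hinj, hpath⟩
  have hL : Lobster.IsLobster G p := ⟨htree, hp, hcover⟩
  obtain ⟨t, ht⟩ := Lobster.exists_isTertiary_of_not_isCaterpillar htree hp hnotcat
  obtain ⟨s, hs, hts⟩ := hL.exists_isSecondary_adj ht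
  obtain ⟨i, hsi⟩ := hs.2
  have ha : 2 ≤ Δ₁ := by
    by_contra h
    exact hnotcat (hL.isCaterpillar_of_degree_le_one hs.1 hsi ((hΔ₁le i).trans (by omega)))
  have hb : 2 ≤ Δ₂ :=
    (two_le_degree_of_adj hts.symm hsi (ht.1 i)).trans (hΔ₂le s hs.1 hs.2)
  have hΔ₂le' : ∀ v, Lobster.IsSecondary G p v → G.degree v ≤ Δ₂ := fun v hv =>
    hΔ₂le v hv.1 hv.2
  have hab := hL.five_le_add_of_not_isPathGraph hnotpath hΔ₁le hΔ₂le' ha hb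
  obtain ⟨c₀, hc₀⟩ := Lobster.exists_isSecondaryLabeling htree.isAcyclic hp hΔ₁le hb hab
  obtain ⟨c, hc⟩ := hc₀.exists_isLobsterLabeling htree.isAcyclic hp hΔ₂le' hab
  have hlab := hc.isTotalDiffLabeling hL hb hab
  have : Nonempty V := ⟨s⟩
  exact ⟨maxDegree_lt_tdChromatic hlab, tdChromatic_le hlab⟩

/-- Bounds for lobsters: `G` is a tree in which every vertex is at distance at most `2`
from the central path `p 0, …, p (n-1)`, and `G` is neither a path nor a caterpillar.
With `Δ₁` the maximum degree among primary vertices (those on the central path) and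
`Δ₂` the maximum degree among secondary vertices (neighbors of primary vertices that
are not primary), we have `Δ + 1 ≤ χ_td(G) ≤ Δ₁ + Δ₂ + 1`. -/
theorem tdChromatic_lobster {V : Type*} [Fintype V] [DecidableEq V] (G : SimpleGraph V)
    [DecidableRel G.Adj] (htree : G.IsTree) (n : ℕ) (p : Fin n → V)
    (hinj : Function.Injective p)
    (hpath : ∀ i : Fin n, ∀ h : (i : ℕ) + 1 < n, G.Adj (p i) (p ⟨(i : ℕ) + 1, h⟩))
    (hcover : ∀ v : V, ∃ i : Fin n, G.dist v (p i) ≤ 2)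
    (hnotpath : ¬ IsPathGraph G) (hnotcat : ¬ IsCaterpillar G)
    (Δ₁ Δ₂ : ℕ)
    (hΔ₁le : ∀ i : Fin n, G.degree (p i) ≤ Δ₁)
    (hΔ₁mem : ∃ i : Fin n, G.degree (p i) = Δ₁)
    (hΔ₂le : ∀ v : V, (∀ i : Fin n, v ≠ p i) → (∃ i : Fin n, G.Adj v (p i)) →
      G.degree v ≤ Δ₂)
    (hΔ₂mem : ∃ v : V, (∀ i : Fin n, v ≠ p i) ∧ (∃ i : Fin n, G.Adj v (p i)) ∧
      G.degree v = Δ₂) :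
    G.maxDegree + 1 ≤ tdChromatic G ∧ tdChromatic G ≤ Δ₁ + Δ₂ + 1 :=
  tdChromatic_lobster_general G htree n p hinj hpath hcover hnotpath hnotcat Δ₁ Δ₂ hΔ₁le hΔ₂le
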